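/- Let φ ∈ ℝ[μ₁,μ₂,μ₃] be a polynomial of degree exactly 3 satisfying the toric nearly Kähler equation, and let φ³ denote its degree-3 homogeneous component. Then det Hess φ³ = (2/3)·φ³ holds as an identity of polynomials. -/

import Mathlib

/-!
Take degree-3 homogeneous components of both sides of the equation. The Euler operator acts on
the degree-`n` component as multiplication by `n`, so the right-hand side contributes
`(8/3 - 11 + 9) φ³ = (2/3) φ³`. Since `deg φ = 3`, the Hessian entries of `φ` have degree at
most `1` and their linear parts are the Hessian entries of `φ³`; expanding the determinant,
only the product of linear parts reaches degree `3`, so the degree-3 part of `det Hess φ` is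
`det Hess φ³`.
-/

open MvPolynomial

/-- The determinant of the Hessian matrix of second partial derivatives of a
polynomial in three variables. -/
noncomputable def hessDet (φ : MvPolynomial (Fin 3) ℝ) : MvPolynomial (Fin 3) ℝ :=
  (Matrix.of fun i j : Fin 3 => pderiv i (pderiv j φ)).det

/-- The Euler operator `∂_r φ = μ₁ ∂φ/∂μ₁ + μ₂ ∂φ/∂μ₂ + μ₃ ∂φ/∂μ₃`. -/
noncomputable def eulerOp (φ : MvPolynomial (Fin 3) ℝ) : MvPolynomial (Fin 3) ℝ :=
  ∑ i : Fin 3, X i * pderiv i φ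

/-- The toric nearly Kähler equation `det Hess φ = (8/3)φ − (11/3)∂_r φ + ∂_r² φ`. -/
def IsTNKSolution (φ : MvPolynomial (Fin 3) ℝ) : Prop :=
  hessDet φ = C (8/3) * φ - C (11/3) * eulerOp φ + eulerOp (eulerOp φ)

namespace MvPolynomial

section CommSemiring

variable {σ R : Type*} [CommSemiring R]

theorem homogeneousComponent_pderiv (n : ℕ) (i : σ) (p : MvPolynomial σ R) :
    homogeneousComponent n (pderiv i p) = pderiv i (homogeneousComponent (n + 1) p) := by
  classical
  ext m
  simp only [coeff_homogeneousComponent, coeff_pderiv, map_add, Finsupp.degree_single]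
  split_ifs <;> simp_all

theorem totalDegree_pderiv_le (i : σ) (p : MvPolynomial σ R) :
    (pderiv i p).totalDegree ≤ p.totalDegree - 1 := by
  conv_lhs => rw [← sum_homogeneousComponent p, map_sum]
  refine totalDegree_finsetSum_le fun m hm => ?_
  have hm : m < p.totalDegree + 1 := Finset.mem_range.mp hm
  exact (homogeneousComponent_isHomogeneous m p).pderiv.totalDegree_le.trans (by omega)

theorem sum_homogeneousComponent_of_totalDegree_le {p : MvPolynomial σ R} {n : ℕ}
    (h : p.totalDegree ≤ n) : ∑ i ∈ Finset.range (n + 1), homogeneousComponent i p = p := by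
  rw [← Finset.sum_subset (Finset.range_subset_range.2 (Nat.succ_le_succ h)),
    sum_homogeneousComponent]
  intro i _ hi
  exact homogeneousComponent_eq_zero _ _ (by simp only [Finset.mem_range] at hi; omega)

theorem homogeneousComponent_one_add_zero {p : MvPolynomial σ R} (h : p.totalDegree ≤ 1) :
    homogeneousComponent 1 p + homogeneousComponent 0 p = p := by
  simpa [Finset.sum_range_succ, add_comm] using sum_homogeneousComponent_of_totalDegree_le h

theorem homogeneousComponent_card_prod_add {ι : Type*} (s : Finset ι)
    (a b : ι → MvPolynomial σ R) (ha : ∀ i ∈ s, (a i).IsHomogeneous 1)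
    (hb : ∀ i ∈ s, (b i).totalDegree = 0) :
    homogeneousComponent s.card (∏ i ∈ s, (a i + b i)) = ∏ i ∈ s, a i := by
  classical
  rw [Finset.prod_add, map_sum, Finset.sum_eq_single_of_mem s (Finset.mem_powerset_self s),
    Finset.sdiff_self, Finset.prod_empty, mul_one]
  · exact homogeneousComponent_eq_self (by simpa using IsHomogeneous.prod s a (fun _ => 1) ha)
  intro t ht hts
  have hts : t ⊂ s := Finset.ssubset_iff_subset_ne.mpr ⟨Finset.mem_powerset.mp ht, hts⟩
  have hat : ∑ i ∈ t, (a i).totalDegree ≤ t.card := by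
    simpa using Finset.sum_le_card_nsmul t _ 1 fun i hi => (ha i (hts.subset hi)).totalDegree_le
  have hbt : ∑ i ∈ s \ t, (b i).totalDegree = 0 :=
    Finset.sum_eq_zero fun i hi => hb i (Finset.sdiff_subset hi)
  refine homogeneousComponent_eq_zero _ _ (lt_of_le_of_lt ?_ (Finset.card_lt_card hts))
  calc ((∏ i ∈ t, a i) * ∏ i ∈ s \ t, b i).totalDegree
      ≤ ∑ i ∈ t, (a i).totalDegree + ∑ i ∈ s \ t, (b i).totalDegree :=
        (totalDegree_mul _ _).trans
          (add_le_add (totalDegree_finsetProd _ _) (totalDegree_finsetProd _ _))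
    _ ≤ t.card := by omega

end CommSemiring

theorem homogeneousComponent_card_det {σ R ι : Type*} [CommRing R] [Fintype ι] [DecidableEq ι]
    (M : Matrix ι ι (MvPolynomial σ R)) (hM : ∀ i j, (M i j).totalDegree ≤ 1) :
    homogeneousComponent (Fintype.card ι) M.det = (M.map (homogeneousComponent 1)).det := by
  simp only [Matrix.det_apply, map_sum, Matrix.map_apply]
  refine Finset.sum_congr rfl fun τ _ => ?_
  rw [Units.smul_def, Units.smul_def, map_zsmul, ← Finset.card_univ]
  congr 1
  conv_lhs => enter [2, 2, i]; rw [← homogeneousComponent_one_add_zero (hM (τ i) i)]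
  refine homogeneousComponent_card_prod_add _ _ _
    (fun i _ => homogeneousComponent_isHomogeneous _ _) fun i _ => ?_
  rw [homogeneousComponent_zero, totalDegree_C]

end MvPolynomial

theorem eulerOp_monomial (s : Fin 3 →₀ ℕ) (a : ℝ) :
    eulerOp (monomial s a) = s.degree • monomial s a :=
  (isHomogeneous_monomial a rfl).sum_X_mul_pderiv

theorem eulerOp_add (p q : MvPolynomial (Fin 3) ℝ) :
    eulerOp (p + q) = eulerOp p + eulerOp q := by
  simp only [eulerOp, map_add, mul_add, Finset.sum_add_distrib]

theorem homogeneousComponent_eulerOp (n : ℕ) (p : MvPolynomial (Fin 3) ℝ) :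
    homogeneousComponent n (eulerOp p) = n • homogeneousComponent n p := by
  induction p using MvPolynomial.induction_on' with
  | monomial s a =>
    rw [eulerOp_monomial, map_nsmul, homogeneousComponent_of_mem (isHomogeneous_monomial a rfl)]
    split_ifs with h
    · rw [h]
    · rw [smul_zero, smul_zero]
  | add p q hp hq => rw [eulerOp_add, map_add, map_add, hp, hq, smul_add]

theorem homogeneousComponent_three_hessDet {φ : MvPolynomial (Fin 3) ℝ}
    (hφ : φ.totalDegree ≤ 3) :
    homogeneousComponent 3 (hessDet φ) = hessDet (homogeneousComponent 3 φ) := by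
  have hM : ∀ i j : Fin 3, (pderiv i (pderiv j φ)).totalDegree ≤ 1 := fun i j => by
    have := totalDegree_pderiv_le i (pderiv j φ)
    have := totalDegree_pderiv_le j φ
    omega
  have hdet :=
    homogeneousComponent_card_det (Matrix.of fun i j : Fin 3 => pderiv i (pderiv j φ)) hM
  rw [Fintype.card_fin] at hdet
  rw [hessDet, hdet, hessDet]
  congr 1
  ext1 i j
  simp only [Matrix.map_apply, Matrix.of_apply, homogeneousComponent_pderiv]

/-- If `φ` has degree exactly `3` and satisfies the toric nearly Kähler equation, then the
degree-3 homogeneous component `φ³` satisfies `det Hess φ³ = (2/3) φ³`. -/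
theorem hessDet_cubic_component (φ : MvPolynomial (Fin 3) ℝ)
    (hdeg : φ.totalDegree = 3) (hTNK : IsTNKSolution φ) :
    hessDet (homogeneousComponent 3 φ) = C (2/3) * homogeneousComponent 3 φ := by
  have h := congrArg (homogeneousComponent 3) hTNK
  rw [homogeneousComponent_three_hessDet hdeg.le, map_add, map_sub, homogeneousComponent_C_mul,
    homogeneousComponent_C_mul, homogeneousComponent_eulerOp, homogeneousComponent_eulerOp,
    homogeneousComponent_eulerOp] at h
  have hcoeff : (C (2/3) : MvPolynomial (Fin 3) ℝ) = C (8/3) - C (11/3) * 3 + 3 * 3 := by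
    simp only [← map_ofNat C, ← map_mul, ← map_sub, ← map_add]
    norm_num
  rw [h, hcoeff]
  simp only [nsmul_eq_mul]
  push_cast
  ring
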